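/- Let l and R be convex functions on ℝ with continuous second derivatives and let R have a finite minimizer. Fix (X, y) with X ∈ ℝ^{n×p} and δ = n/p. Define ψ(x, θ) := θ l'( η_l(x, θ) ) and let η, η_l be the proximal operators of R and l respectively. Then the AMP fixed-point system { β = η( β + Xᵀ ψ(z, θ)/⟨ψ'(z, θ)⟩, τ ); z = y − Xβ + ψ(z, θ); ⟨ψ'(z, θ)⟩ = (1/δ) ⟨ η'( β + Xᵀψ(z, θ)/⟨ψ'(z, θ)⟩, τ ) ⟩; γ = τ · ⟨ l''(y − Xβ) / (1 + θ l''(y − Xβ)) ⟩ } in the unknowns (β, z, θ, τ, γ) is equivalent to the system { 0 = −Xᵀ l'(y − Xβ) + γ R'(β); γ = ⟨ l''(y − Xβ) / ( 1/τ + (1/(δγ))⟨1/(1+τR''(β))⟩ · l''(y − Xβ) ) ⟩; θ = (1/(δγ)) ⟨ τ/(1+τR''(β)) ⟩; z = y − Xβ + θ · l'(y − Xβ) }. -/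

import Mathlib

open MeasureTheory ProbabilityTheory Matrix Filter Finset
open scoped NNReal ENNReal

noncomputable section

/-- The second derivative of a function `ℝ → ℝ`. -/
def D2 (f : ℝ → ℝ) : ℝ → ℝ := deriv (deriv f)

/-- The average `⟨v⟩` of the entries of a finite vector. -/
def avg {m : ℕ} (v : Fin m → ℝ) : ℝ := (∑ i, v i) / m

/-- The Euclidean norm of a finite vector. -/
def vnorm {m : ℕ} (v : Fin m → ℝ) : ℝ := Real.sqrt (∑ i, v i ^ 2)

/-- `Z = O_p(a)`: stochastic boundedness in probability at rate `a`. -/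
def IsBigOp {Ω : Type} [MeasureSpace Ω] (Z : ℕ → Ω → ℝ) (a : ℕ → ℝ) : Prop :=
  ∀ ε : ℝ, 0 < ε → ∃ C : ℝ, 0 < C ∧ ∃ N : ℕ, ∀ k : ℕ, N < k →
    (MeasureTheory.volume {ω : Ω | C * a k < |Z k ω|}).toReal ≤ ε

/-- `Z = O_p(plog(n) · a)`: stochastic boundedness up to a polylogarithmic factor in `n`. -/
def IsBigOpPlog {Ω : Type} [MeasureSpace Ω] (Z : ℕ → Ω → ℝ) (nn : ℕ → ℕ) (a : ℕ → ℝ) : Prop :=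
  ∃ m : ℕ, IsBigOp Z fun k => Real.log (nn k) ^ m * a k

/-- The response vector `y = Xβ₀ + w`. -/
def yvec {n p : ℕ} (X : Matrix (Fin n) (Fin p) ℝ) (b0 : Fin p → ℝ) (w : Fin n → ℝ) :
    Fin n → ℝ := X *ᵥ b0 + w

/-- The residual vector `y - Xb`. -/
def resid {n p : ℕ} (X : Matrix (Fin n) (Fin p) ℝ) (y : Fin n → ℝ) (b : Fin p → ℝ) :
    Fin n → ℝ := fun i => y i - (X *ᵥ b) i

/-- The penalized empirical risk objective. -/
def obj (l R : ℝ → ℝ) (lam : ℝ) {n p : ℕ} (X : Matrix (Fin n) (Fin p) ℝ)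
    (y : Fin n → ℝ) (b : Fin p → ℝ) : ℝ :=
  (∑ i, l (y i - (X *ᵥ b) i)) + lam * ∑ j, R (b j)

/-- The leave-observation-`i`-out objective. -/
def objLoo (l R : ℝ → ℝ) (lam : ℝ) {n p : ℕ} (X : Matrix (Fin n) (Fin p) ℝ)
    (y : Fin n → ℝ) (i : Fin n) (b : Fin p → ℝ) : ℝ :=
  (∑ j ∈ Finset.univ.erase i, l (y j - (X *ᵥ b) j)) + lam * ∑ j, R (b j)

/-- The matrix `Xᵀ diag(l''(y - Xb)) X - l''((y-Xb)_i) x_i x_iᵀ + λ diag(R''(b) + c₃)`;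
with `c₃ = 0` this is `Ã_i` (for `b` the leave-`i`-out estimate) or `Â_i` (for `b = β̂`). -/
def Amat (l R : ℝ → ℝ) (lam c3 : ℝ) {n p : ℕ} (X : Matrix (Fin n) (Fin p) ℝ)
    (y : Fin n → ℝ) (i : Fin n) (b : Fin p → ℝ) : Matrix (Fin p) (Fin p) ℝ :=
  Xᵀ * Matrix.diagonal (fun j => D2 l (resid X y b j)) * X
    - D2 l (resid X y b i) • Matrix.vecMulVec (X i) (X i)
    + lam • Matrix.diagonal (fun j => D2 R (b j) + c3)

/-- The matrix `Xᵀ diag(l''(y - Xb)) X + λ diag(R''(b) + c₃)` (no rank-one correction). -/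
def Afull (l R : ℝ → ℝ) (lam c3 : ℝ) {n p : ℕ} (X : Matrix (Fin n) (Fin p) ℝ)
    (y : Fin n → ℝ) (b : Fin p → ℝ) : Matrix (Fin p) (Fin p) ℝ :=
  Xᵀ * Matrix.diagonal (fun j => D2 l (resid X y b j)) * X
    + lam • Matrix.diagonal (fun j => D2 R (b j) + c3)

/-!
Write `r = y - Xβ`. The first-order condition `x - η_f(x, θ) = θ f'(η_f(x, θ))`, together with
its uniqueness (`t ↦ t + θ f'(t)` is strictly increasing for convex `f`), turns the `z`-equation of
either system into `η_l(z, θ) = r`, so that `ψ(z, θ) = θ l'(r)` and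
`ψ'(z, θ) = θ l''(r) / (1 + θ l''(r))`, and turns the `β`-equation into
`Xᵀ ψ / ⟨ψ'⟩ = τ R'(β)`, which makes `η' = 1 / (1 + τ R''(β))`. What remains is scalar algebra
in `L = ⟨l''(r) / (1 + θ l''(r))⟩` and `A = ⟨1 / (1 + τ R''(β))⟩`: both systems say
`γ = τ L` and `θ L = A / δ`, i.e. `⟨ψ'⟩ = θ γ / τ`.
-/

section Prox

variable {f : ℝ → ℝ} {θ : ℝ}

theorem hasDerivAt_prox_objective (hf : Differentiable ℝ f) (x t : ℝ) :
    HasDerivAt (fun s => 1 / 2 * (x - s) ^ 2 + θ * f s) (t - x + θ * deriv f t) t := by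
  have hsq := (((hasDerivAt_id' t).const_sub x).fun_pow 2).const_mul (1 / 2 : ℝ)
  refine (hsq.fun_add ((hf t).hasDerivAt.const_mul θ)).congr_deriv ?_
  push_cast
  ring

theorem sub_prox_eq_mul_deriv {x m : ℝ} (hf : Differentiable ℝ f)
    (hm : IsMinOn (fun t => 1 / 2 * (x - t) ^ 2 + θ * f t) Set.univ m) :
    x - m = θ * deriv f m := by
  have := (hm.isLocalMin Filter.univ_mem).hasDerivAt_eq_zero (hasDerivAt_prox_objective hf x m)
  linarith

theorem prox_eq_iff {x m : ℝ} (hconv : ConvexOn ℝ Set.univ f) (hf : Differentiable ℝ f) (hθ : 0 < θ)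
    (hm : IsMinOn (fun t => 1 / 2 * (x - t) ^ 2 + θ * f t) Set.univ m) (m' : ℝ) :
    m = m' ↔ x - m' = θ * deriv f m' := by
  refine ⟨fun h => h ▸ sub_prox_eq_mul_deriv hf hm, fun h => ?_⟩
  have hmono : Monotone (deriv f) :=
    monotoneOn_univ.mp (hconv.monotoneOn_deriv fun s _ => hf s)
  have hinj : StrictMono fun t => t + θ * deriv f t := fun a b hab => by
    have := mul_le_mul_of_nonneg_left (hmono hab.le) hθ.le
    dsimp only
    linarith
  apply hinj.injective
  have := sub_prox_eq_mul_deriv hf hm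
  dsimp only
  linarith

variable {P : ℝ → ℝ → ℝ}

theorem eq_add_mul_deriv_prox_iff (hf : Differentiable ℝ f)
    (hP : ∀ x, IsMinOn (fun t => 1 / 2 * (x - t) ^ 2 + θ * f t) Set.univ (P x θ)) (x r : ℝ) :
    x = r + θ * deriv f (P x θ) ↔ P x θ = r := by
  have := sub_prox_eq_mul_deriv hf (hP x)
  constructor <;> intro h <;> linarith

theorem eq_add_mul_deriv_iff_prox_eq (hconv : ConvexOn ℝ Set.univ f) (hf : Differentiable ℝ f)
    (hθ : 0 < θ) (hP : ∀ x, IsMinOn (fun t => 1 / 2 * (x - t) ^ 2 + θ * f t) Set.univ (P x θ))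
    (x r : ℝ) :
    x = r + θ * deriv f r ↔ P x θ = r := by
  rw [prox_eq_iff hconv hf hθ (hP x)]
  constructor <;> intro h <;> linarith

theorem prox_fixed_point_iff {p : ℕ} (hconv : ConvexOn ℝ Set.univ f) (hf : Differentiable ℝ f)
    (hθ : 0 < θ) (hP : ∀ x, IsMinOn (fun t => 1 / 2 * (x - t) ^ 2 + θ * f t) Set.univ (P x θ))
    {D : ℝ → ℝ → ℝ} (hD : ∀ x, D x θ = 1 / (1 + θ * D2 f (P x θ))) (β v : Fin p → ℝ) (c a : ℝ) :
    ((∀ j, β j = P (β j + v j) θ) ∧ c = a * avg (fun j => D (β j + v j) θ)) ↔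
      ((∀ j, v j = θ * deriv f (β j)) ∧ c = a * avg (fun j => 1 / (1 + θ * D2 f (β j)))) := by
  have hfix : ∀ j, β j = P (β j + v j) θ ↔ v j = θ * deriv f (β j) := fun j => by
    rw [eq_comm, prox_eq_iff hconv hf hθ (hP _), add_sub_cancel_left]
  rw [← forall_congr' hfix]
  refine and_congr_right fun hβ => ?_
  simp only [hD, ← hβ]

end Prox

theorem avg_const_mul {m : ℕ} (k : ℝ) (v : Fin m → ℝ) :
    avg (fun i => k * v i) = k * avg v := by
  rw [avg, avg, ← Finset.mul_sum, mul_div_assoc]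

theorem calibration_iff {n p : ℕ} (X : Matrix (Fin n) (Fin p) ℝ) (g h : Fin n → ℝ)
    (dR d2R : Fin p → ℝ) {θ τ γ : ℝ} (δ : ℝ) (hθ : θ ≠ 0) (hτ : τ ≠ 0) (hγ : γ ≠ 0) :
    (((∀ j, (Xᵀ *ᵥ fun i => θ * g i / avg (fun i => θ * h i / (1 + θ * h i))) j = τ * dR j) ∧
        avg (fun i => θ * h i / (1 + θ * h i)) = 1 / δ * avg (fun j => 1 / (1 + τ * d2R j))) ∧
      γ = τ * avg (fun i => h i / (1 + θ * h i))) ↔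
    ((∀ j, 0 = -(Xᵀ *ᵥ g) j + γ * dR j) ∧
      γ = avg (fun i => h i / (1 / τ + 1 / (δ * γ) * avg (fun j => 1 / (1 + τ * d2R j)) * h i)) ∧
      θ = 1 / (δ * γ) * avg (fun j => τ / (1 + τ * d2R j))) := by
  set L := avg fun i => h i / (1 + θ * h i)
  set A := avg fun j => 1 / (1 + τ * d2R j)
  have hθL : avg (fun i => θ * h i / (1 + θ * h i)) = θ * L := by
    simp_rw [mul_div_assoc]
    exact avg_const_mul θ _
  have hτA : avg (fun j => τ / (1 + τ * d2R j)) = τ * A := by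
    simp_rw [← mul_one_div τ]
    exact avg_const_mul τ _
  have hXg : (Xᵀ *ᵥ fun i => θ * g i / (θ * L)) = (1 / L) • (Xᵀ *ᵥ g) := by
    rw [← mulVec_smul]
    congr 1
    ext i
    simp only [Pi.smul_apply, smul_eq_mul]
    field_simp
  have hτL : θ = 1 / (δ * γ) * (τ * A) →
      avg (fun i => h i / (1 / τ + 1 / (δ * γ) * A * h i)) = τ * L := fun hθA => by
    have hk : 1 / (δ * γ) * A = θ / τ := by
      rw [hθA]
      field_simp
    rw [← avg_const_mul τ, hk]
    refine congrArg avg (funext fun i => ?_)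
    rw [show 1 / τ + θ / τ * h i = (1 + θ * h i) / τ by field_simp, div_div_eq_mul_div]
    ring
  rw [hθL, hτA, hXg]
  simp only [Pi.smul_apply, smul_eq_mul]
  constructor
  · rintro ⟨⟨hβ, hc⟩, hγτ⟩
    have hL : L ≠ 0 := by rintro hL; simp [hL, hγ] at hγτ
    have hδ : δ ≠ 0 := by rintro rfl; simp [hθ, hL] at hc
    have hθA : θ = 1 / (δ * γ) * (τ * A) := by
      rw [hγτ, show A = δ * (θ * L) by rw [hc]; field_simp]
      field_simp
    refine ⟨fun j => ?_, hγτ.trans (hτL hθA).symm, hθA⟩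
    have := hβ j
    field_simp at this
    rw [hγτ]
    linear_combination this
  · rintro ⟨hG, hγL, hθA⟩
    have hγτ := hγL.trans (hτL hθA)
    have hL : L ≠ 0 := by rintro hL; simp [hL, hγ] at hγτ
    refine ⟨⟨fun j => ?_, ?_⟩, hγτ⟩
    · have hGj := hG j
      rw [hγτ] at hGj
      field_simp
      linear_combination hGj
    · rw [hθA, hγτ]
      field_simp

theorem and_and_and_iff_of_imp {a b c d e f g : Prop} (h : b → (a ∧ c ∧ d ↔ e ∧ f ∧ g)) :
    a ∧ b ∧ c ∧ d ↔ e ∧ f ∧ g ∧ b := by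
  tauto

theorem amp_fixed_point_equivalence_general
    (l R : ℝ → ℝ)
    (hlconv : ConvexOn ℝ Set.univ l) (hRconv : ConvexOn ℝ Set.univ R)
    (hlC2 : ContDiff ℝ 2 l) (hRC2 : ContDiff ℝ 2 R)
    (n p : ℕ)
    (δ : ℝ)
    (X : Matrix (Fin n) (Fin p) ℝ) (y : Fin n → ℝ)
    (η ηl : ℝ → ℝ → ℝ)
    (hη : ∀ x τ : ℝ, 0 < τ →
      IsMinOn (fun t : ℝ => 1 / 2 * (x - t) ^ 2 + τ * R t) Set.univ (η x τ))
    (hηl : ∀ x θ : ℝ, 0 < θ →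
      IsMinOn (fun t : ℝ => 1 / 2 * (x - t) ^ 2 + θ * l t) Set.univ (ηl x θ))
    (ψ : ℝ → ℝ → ℝ) (hψ : ∀ x θ : ℝ, ψ x θ = θ * deriv l (ηl x θ))
    (ψ' : ℝ → ℝ → ℝ)
    (hψ' : ∀ x θ : ℝ, ψ' x θ = θ * D2 l (ηl x θ) / (1 + θ * D2 l (ηl x θ)))
    (η' : ℝ → ℝ → ℝ)
    (hη' : ∀ x τ : ℝ, η' x τ = 1 / (1 + τ * D2 R (η x τ))) :
    ∀ (β : Fin p → ℝ) (z : Fin n → ℝ) (θ τ γ : ℝ), 0 < θ → 0 < τ → 0 < γ →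
      (((∀ j, β j = η (β j +
            (Xᵀ *ᵥ fun i => ψ (z i) θ / avg (fun i' => ψ' (z i') θ)) j) τ) ∧
        (∀ i, z i = y i - (X *ᵥ β) i + ψ (z i) θ) ∧
        avg (fun i => ψ' (z i) θ) = 1 / δ * avg (fun j =>
          η' (β j + (Xᵀ *ᵥ fun i => ψ (z i) θ / avg (fun i' => ψ' (z i') θ)) j) τ) ∧
        γ = τ * avg (fun i =>
          D2 l (y i - (X *ᵥ β) i) / (1 + θ * D2 l (y i - (X *ᵥ β) i))))
      ↔
      ((∀ j, 0 = -((Xᵀ *ᵥ fun i => deriv l (y i - (X *ᵥ β) i)) j) + γ * deriv R (β j)) ∧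
        γ = avg (fun i => D2 l (y i - (X *ᵥ β) i) /
              (1 / τ + 1 / (δ * γ) * avg (fun j => 1 / (1 + τ * D2 R (β j))) *
                D2 l (y i - (X *ᵥ β) i))) ∧
        θ = 1 / (δ * γ) * avg (fun j => τ / (1 + τ * D2 R (β j))) ∧
        (∀ i, z i = y i - (X *ᵥ β) i + θ * deriv l (y i - (X *ᵥ β) i)))) := by
  intro β z θ τ γ hθ hτ hγ
  have hl : Differentiable ℝ l := hlC2.differentiable (by norm_num)
  have hR : Differentiable ℝ R := hRC2.differentiable (by norm_num)
  have hηlθ := fun x => hηl x θ hθ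
  simp only [hψ, eq_add_mul_deriv_prox_iff hl hηlθ,
    eq_add_mul_deriv_iff_prox_eq hlconv hl hθ hηlθ]
  refine and_and_and_iff_of_imp fun hres => ?_
  simp only [hψ', hres]
  rw [← and_assoc, prox_fixed_point_iff hRconv hR hτ (fun x => hη x τ hτ) (fun x => hη' x τ)]
  exact calibration_iff X _ _ _ _ δ hθ.ne' hτ.ne' hγ.ne'

/-- The AMP fixed-point system is equivalent to the system describing
the regularized estimator together with the AMP calibration equations. -/
theorem amp_fixed_point_equivalence
    (l R : ℝ → ℝ)
    (hlconv : ConvexOn ℝ Set.univ l) (hRconv : ConvexOn ℝ Set.univ R)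
    (hlC2 : ContDiff ℝ 2 l) (hRC2 : ContDiff ℝ 2 R)
    (hRmin : ∃ x0 : ℝ, ∀ x : ℝ, R x0 ≤ R x)
    (n p : ℕ) (hn : 0 < n) (hp : 0 < p)
    (δ : ℝ) (hδ : δ = (n : ℝ) / p)
    (X : Matrix (Fin n) (Fin p) ℝ) (y : Fin n → ℝ)
    (η ηl : ℝ → ℝ → ℝ)
    (hη : ∀ x τ : ℝ, 0 < τ →
      IsMinOn (fun t : ℝ => 1 / 2 * (x - t) ^ 2 + τ * R t) Set.univ (η x τ))
    (hηl : ∀ x θ : ℝ, 0 < θ →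
      IsMinOn (fun t : ℝ => 1 / 2 * (x - t) ^ 2 + θ * l t) Set.univ (ηl x θ))
    (ψ : ℝ → ℝ → ℝ) (hψ : ∀ x θ : ℝ, ψ x θ = θ * deriv l (ηl x θ))
    (ψ' : ℝ → ℝ → ℝ)
    (hψ' : ∀ x θ : ℝ, ψ' x θ = θ * D2 l (ηl x θ) / (1 + θ * D2 l (ηl x θ)))
    (η' : ℝ → ℝ → ℝ)
    (hη' : ∀ x τ : ℝ, η' x τ = 1 / (1 + τ * D2 R (η x τ))) :
    ∀ (β : Fin p → ℝ) (z : Fin n → ℝ) (θ τ γ : ℝ), 0 < θ → 0 < τ → 0 < γ →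
      (((∀ j, β j = η (β j +
            (Xᵀ *ᵥ fun i => ψ (z i) θ / avg (fun i' => ψ' (z i') θ)) j) τ) ∧
        (∀ i, z i = y i - (X *ᵥ β) i + ψ (z i) θ) ∧
        avg (fun i => ψ' (z i) θ) = 1 / δ * avg (fun j =>
          η' (β j + (Xᵀ *ᵥ fun i => ψ (z i) θ / avg (fun i' => ψ' (z i') θ)) j) τ) ∧
        γ = τ * avg (fun i =>
          D2 l (y i - (X *ᵥ β) i) / (1 + θ * D2 l (y i - (X *ᵥ β) i))))
      ↔
      ((∀ j, 0 = -((Xᵀ *ᵥ fun i => deriv l (y i - (X *ᵥ β) i)) j) + γ * deriv R (β j)) ∧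
        γ = avg (fun i => D2 l (y i - (X *ᵥ β) i) /
              (1 / τ + 1 / (δ * γ) * avg (fun j => 1 / (1 + τ * D2 R (β j))) *
                D2 l (y i - (X *ᵥ β) i))) ∧
        θ = 1 / (δ * γ) * avg (fun j => τ / (1 + τ * D2 R (β j))) ∧
        (∀ i, z i = y i - (X *ᵥ β) i + θ * deriv l (y i - (X *ᵥ β) i)))) :=
  amp_fixed_point_equivalence_general l R hlconv hRconv hlC2 hRC2 n p δ X y η ηl hη hηl ψ hψ ψ' hψ'
    η' hη'
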